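/- arXiv:1206.3390 — 3 statements merged into one kernel-verified Lean document; each statement's English description precedes it below -/
import Mathlib

section
/- There exists a constant c>0 (depending only on F, α and κ, not on n) such that for every ε>0 there is N∈ℕ with the following property: for all n≥N, ∫_{(-∞,x_n]} e^{φ_n x} dF(x) ≤ 1 + c·φ_n^κ + e^{2α}·F̄(2α/φ_n) + (1+ε)·e^{φ_n x_n}·F̄(x_n). -/
/-!
Split `(-∞, xₙ]` at `a = 2α/φₙ` and at `t xₙ`, where `t < 1` is so close to `1` that
`t^{-α} < 1 + ε/2`. On `(-∞, a]` we have `u = φₙ y ≤ 2α`, where `e^u ≤ 1 + u + e^{2α} |u|^κ`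
(the linear term only for `κ > 1`, and then it integrates to something `≤ 0` because `F` is
centred); this gives `1 + e^{2α} φₙ^κ ∫ |y|^κ dF`. On `(t xₙ, xₙ]` the integrand is at most
`e^{φₙ xₙ}` and, by regular variation, `F̄(t xₙ) ≤ (1 + ε/2) F̄(xₙ)` eventually. On `(a, t xₙ]`
it is at most `e^{t φₙ xₙ}`, while a Potter-type bound gives
`F̄(a) ≤ C (xₙ/a)^{α+1} F̄(xₙ) = C (φₙ xₙ / 2α)^{α+1} F̄(xₙ)`; as `φₙ xₙ → ∞`, the factor
`(φₙ xₙ)^{α+1} e^{-(1-t) φₙ xₙ}` makes this piece at most `(ε/2) e^{φₙ xₙ} F̄(xₙ)`.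
-/

open MeasureTheory ProbabilityTheory Filter

noncomputable section

/-- Right tail `F̄(x) = F((x,∞))` of a measure on `ℝ`, as a real number. -/
def rtail (F : Measure ℝ) (x : ℝ) : ℝ := (F (Set.Ioi x)).toReal

/-- `L` is slowly varying at infinity. -/
def SlowlyVarying (L : ℝ → ℝ) : Prop :=
  ∀ t > 0, Tendsto (fun x => L (t * x) / L x) atTop (nhds 1)

open Real Set Topology

theorem Real.exp_le_one_add_exp_mul_abs_rpow {κ M u : ℝ} (hκ0 : 0 < κ) (hκ1 : κ ≤ 1) (hu : u ≤ M) :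
    exp u ≤ 1 + exp M * |u| ^ κ := by
  have hpow : 0 ≤ exp M * |u| ^ κ := by positivity
  rcases le_or_gt u 0 with hu0 | hu0
  · linarith [exp_le_one_iff.2 hu0]
  rw [abs_of_pos hu0]
  rcases le_or_gt u 1 with hu1 | hu1
  · have hexp : exp u ≤ 1 + u * exp u := by
      nlinarith [add_one_le_exp (-u), exp_neg u, mul_inv_cancel₀ (exp_pos u).ne', exp_pos u]
    have hu_le : u ≤ u ^ κ := by
      simpa using rpow_le_rpow_of_exponent_ge hu0 hu1 hκ1
    nlinarith [exp_le_exp.2 hu, exp_pos u, exp_pos M]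
  · have : 1 ≤ u ^ κ := one_le_rpow hu1.le hκ0.le
    nlinarith [exp_le_exp.2 hu, exp_pos M]

theorem Real.exp_le_one_add_add_exp_mul_abs_rpow {κ M u : ℝ} (hκ1 : 1 ≤ κ) (hκ2 : κ ≤ 2)
    (hM : 0 ≤ M) (hu : u ≤ M) : exp u ≤ 1 + u + exp M * |u| ^ κ := by
  have hexpM : 1 ≤ exp M := one_le_exp hM
  have hpow : 0 ≤ |u| ^ κ := by positivity
  rcases le_or_gt |u| 1 with hu1 | hu1
  · have hsq : u ^ 2 ≤ |u| ^ κ := by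
      rw [← sq_abs, ← rpow_two]
      exact rpow_le_rpow_of_exponent_ge' (abs_nonneg u) hu1 (by linarith) hκ2
    have := (abs_le.1 (abs_exp_sub_one_sub_id_le hu1)).2
    nlinarith
  have hu_le : |u| ≤ |u| ^ κ := by simpa using rpow_le_rpow_of_exponent_le hu1.le hκ1
  rcases le_or_gt u 0 with hu0 | hu0
  · nlinarith [exp_le_one_iff.2 hu0, neg_le_abs u]
  · rw [abs_of_pos hu0] at hu1 hu_le ⊢
    nlinarith [exp_le_exp.2 hu]

section TailIntegrals

variable {F : Measure ℝ}

theorem rtail_nonneg (x : ℝ) : 0 ≤ rtail F x := ENNReal.toReal_nonneg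

theorem rtail_le_one [IsProbabilityMeasure F] (x : ℝ) : rtail F x ≤ 1 := measureReal_le_one

theorem rtail_antitone [IsFiniteMeasure F] : Antitone (rtail F) :=
  fun _ _ h => measureReal_mono (Ioi_subset_Ioi h)

theorem integrableOn_Iic_exp_mul [IsFiniteMeasure F] {φ : ℝ} (hφ : 0 ≤ φ) (b : ℝ) :
    IntegrableOn (fun y => exp (φ * y)) (Iic b) F :=
  Measure.integrableOn_of_bounded (M := exp (φ * b)) (measure_ne_top F _)
    (by fun_prop : Continuous fun y => exp (φ * y)).aestronglyMeasurable
    ((ae_restrict_iff' measurableSet_Iic).2 (Eventually.of_forall fun y hy => by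
      rw [norm_of_nonneg (exp_pos _).le]
      exact exp_le_exp.2 (mul_le_mul_of_nonneg_left hy hφ)))

theorem setIntegral_Ioc_exp_mul_le [IsFiniteMeasure F] {φ : ℝ} (hφ : 0 ≤ φ) (u v : ℝ) :
    ∫ y in Ioc u v, exp (φ * y) ∂F ≤ exp (φ * v) * rtail F u :=
  calc ∫ y in Ioc u v, exp (φ * y) ∂F ≤ ∫ _ in Ioc u v, exp (φ * v) ∂F :=
        setIntegral_mono_on ((integrableOn_Iic_exp_mul hφ v).mono_set Ioc_subset_Iic_self)
          integrableOn_const measurableSet_Ioc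
          fun y hy => exp_le_exp.2 (mul_le_mul_of_nonneg_left hy.2 hφ)
    _ = F.real (Ioc u v) * exp (φ * v) := by rw [setIntegral_const, smul_eq_mul]
    _ ≤ rtail F u * exp (φ * v) := by gcongr; exact measureReal_mono Ioc_subset_Ioi_self
    _ = exp (φ * v) * rtail F u := mul_comm _ _

theorem setIntegral_Iic_exp_mul_le_add [IsFiniteMeasure F] {φ a b c : ℝ} (hφ : 0 ≤ φ)
    (hab : a ≤ b) (hbc : b ≤ c) :
    ∫ y in Iic c, exp (φ * y) ∂F ≤
      ∫ y in Iic a, exp (φ * y) ∂F + exp (φ * b) * rtail F a + exp (φ * c) * rtail F b := by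
  have hI := integrableOn_Iic_exp_mul (F := F) hφ
  rw [← Iic_union_Ioc_eq_Iic hbc, setIntegral_union (Iic_disjoint_Ioc le_rfl) measurableSet_Ioc
    (hI b) ((hI c).mono_set Ioc_subset_Iic_self), ← Iic_union_Ioc_eq_Iic hab,
    setIntegral_union (Iic_disjoint_Ioc le_rfl) measurableSet_Ioc (hI a)
    ((hI b).mono_set Ioc_subset_Iic_self)]
  linarith [setIntegral_Ioc_exp_mul_le (F := F) hφ a b, setIntegral_Ioc_exp_mul_le (F := F) hφ b c]

theorem setIntegral_Iic_id_nonpos (hint : Integrable (fun x => x) F) (hmean : ∫ x, x ∂F = 0)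
    {a : ℝ} (ha : 0 ≤ a) : ∫ y in Iic a, y ∂F ≤ 0 := by
  have hsplit := integral_add_compl (s := Iic a) measurableSet_Iic hint
  rw [compl_Iic, hmean] at hsplit
  have : 0 ≤ ∫ y in Ioi a, y ∂F := setIntegral_nonneg measurableSet_Ioi fun y hy => ha.trans hy.le
  linarith

theorem setIntegral_le_one_add_mul_integral_abs_rpow [IsProbabilityMeasure F] {s : Set ℝ}
    (hs : MeasurableSet s) {f g : ℝ → ℝ} {C κ : ℝ} (hf : IntegrableOn f s F)
    (hg : IntegrableOn g s F) (hg0 : ∫ y in s, g y ∂F ≤ 0) (hC : 0 ≤ C)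
    (hmom : Integrable (fun y => |y| ^ κ) F) (hfg : ∀ y ∈ s, f y ≤ 1 + g y + C * |y| ^ κ) :
    ∫ y in s, f y ∂F ≤ 1 + C * ∫ y, |y| ^ κ ∂F := by
  have hmom_s : ∫ y in s, |y| ^ κ ∂F ≤ ∫ y, |y| ^ κ ∂F :=
    setIntegral_le_integral hmom (Eventually.of_forall fun y => by positivity)
  have hs1 : F.real s ≤ 1 := measureReal_le_one
  have hone : IntegrableOn (fun _ => (1 : ℝ)) s F := integrableOn_const
  have hbound : IntegrableOn (fun y => 1 + g y) s F := hone.add hg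
  calc ∫ y in s, f y ∂F ≤ ∫ y in s, (1 + g y + C * |y| ^ κ) ∂F :=
        setIntegral_mono_on hf (hbound.add (hmom.integrableOn.const_mul C)) hs hfg
    _ = F.real s + ∫ y in s, g y ∂F + C * ∫ y in s, |y| ^ κ ∂F := by
        rw [integral_add hbound (hmom.integrableOn.const_mul C), integral_add hone hg,
          integral_const_mul, setIntegral_const, smul_eq_mul, mul_one]
    _ ≤ 1 + C * ∫ y, |y| ^ κ ∂F := by nlinarith

theorem setIntegral_Iic_exp_mul_le [IsProbabilityMeasure F] (hint : Integrable (fun x => x) F)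
    (hmean : ∫ x, x ∂F = 0) {κ : ℝ} (hκ0 : 0 < κ) (hκ2 : κ ≤ 2)
    (hmom : Integrable (fun y => |y| ^ κ) F) {φ M : ℝ} (hφ : 0 < φ) (hM : 0 ≤ M) :
    ∫ y in Iic (M / φ), exp (φ * y) ∂F ≤ 1 + exp M * φ ^ κ * ∫ y, |y| ^ κ ∂F := by
  have hφy : ∀ y ∈ Iic (M / φ), φ * y ≤ M := fun y hy => (le_div_iff₀' hφ).1 hy
  have habs (y : ℝ) : exp M * |φ * y| ^ κ = exp M * φ ^ κ * |y| ^ κ := by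
    rw [abs_mul, abs_of_pos hφ, mul_rpow hφ.le (abs_nonneg y), mul_assoc]
  have hexp := integrableOn_Iic_exp_mul (F := F) hφ.le (M / φ)
  rcases le_or_gt κ 1 with hκ1 | hκ1
  · refine setIntegral_le_one_add_mul_integral_abs_rpow measurableSet_Iic hexp (g := 0)
      integrableOn_zero (by simp) (by positivity) hmom fun y hy => ?_
    simpa only [Pi.zero_apply, add_zero, habs] using
      exp_le_one_add_exp_mul_abs_rpow hκ0 hκ1 (hφy y hy)
  · have hmean_le : ∫ y in Iic (M / φ), φ * y ∂F ≤ 0 := by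
      rw [integral_const_mul]
      exact mul_nonpos_of_nonneg_of_nonpos hφ.le
        (setIntegral_Iic_id_nonpos hint hmean (div_nonneg hM hφ.le))
    refine setIntegral_le_one_add_mul_integral_abs_rpow measurableSet_Iic hexp
      (hint.const_mul φ).integrableOn hmean_le (by positivity) hmom fun y hy => ?_
    simpa only [← habs, add_assoc] using
      exp_le_one_add_add_exp_mul_abs_rpow hκ1.le hκ2 hM (hφy y hy)

end TailIntegrals

theorem Antitone.le_rpow_mul_of_doubling {f : ℝ → ℝ} (hf : Antitone f) (hf0 : ∀ z, 0 ≤ f z)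
    {β X : ℝ} (hβ : 0 ≤ β) (hX : 0 < X) (hd : ∀ z, X ≤ z → f (z / 2) ≤ 2 ^ β * f z)
    {u v : ℝ} (hu : X ≤ u) (huv : u ≤ v) : f u ≤ (2 * v / u) ^ β * f v := by
  obtain ⟨k, hk⟩ := pow_unbounded_of_one_lt (v / u) one_lt_two
  induction k generalizing u with
  | zero =>
    have hu0 : 0 < u := hX.trans_le hu
    rw [pow_zero, div_lt_one hu0] at hk
    exact absurd huv (not_le.2 hk)
  | succ k ih =>
    have hu0 : 0 < u := hX.trans_le hu
    rcases le_or_gt v (2 * u) with hv | hv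
    · have h2 : 2 ≤ 2 * v / u := by rw [le_div_iff₀ hu0]; nlinarith
      calc f u ≤ f (v / 2) := hf (by linarith)
        _ ≤ 2 ^ β * f v := hd v (hu.trans huv)
        _ ≤ (2 * v / u) ^ β * f v := by gcongr; exact hf0 v
    · have hk' : v / (2 * u) < 2 ^ k := by
        rw [pow_succ, ← div_lt_iff₀ two_pos, div_div, mul_comm u] at hk
        exact hk
      have h2u := ih (u := 2 * u) (by linarith) hv.le hk'
      calc f u = f (2 * u / 2) := by rw [mul_div_cancel_left₀ u two_ne_zero]
        _ ≤ 2 ^ β * f (2 * u) := hd _ (by linarith)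
        _ ≤ 2 ^ β * ((2 * v / (2 * u)) ^ β * f v) := by gcongr
        _ = (2 * v / u) ^ β * f v := by
          rw [mul_div_mul_left _ _ two_ne_zero, ← mul_assoc,
            ← mul_rpow zero_le_two (div_nonneg (by linarith) hu0.le), mul_div_assoc]

section RegularVariation

variable {F : Measure ℝ} {α : ℝ} {L : ℝ → ℝ}

theorem rtail_pos (hLpos : ∀ x > 0, 0 < L x) (htail : ∀ x > 0, rtail F x = L x * x ^ (-α))
    {x : ℝ} (hx : 0 < x) : 0 < rtail F x := by
  rw [htail x hx]
  exact mul_pos (hLpos x hx) (rpow_pos_of_pos hx _)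

theorem tendsto_rtail_mul_div_rtail (hL : SlowlyVarying L)
    (htail : ∀ x > 0, rtail F x = L x * x ^ (-α)) {t : ℝ} (ht : 0 < t) :
    Tendsto (fun z => rtail F (t * z) / rtail F z) atTop (𝓝 (t ^ (-α))) := by
  refine (one_mul (t ^ (-α)) ▸ (hL t ht).mul_const (t ^ (-α))).congr' ?_
  filter_upwards [eventually_gt_atTop 0] with z hz
  rw [htail _ (mul_pos ht hz), htail z hz, mul_rpow ht.le hz.le, mul_div_mul_comm,
    mul_div_cancel_right₀ _ (rpow_pos_of_pos hz _).ne']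

theorem rtail_le_mul_rpow_div_mul_rtail [IsProbabilityMeasure F] (hLpos : ∀ x > 0, 0 < L x)
    (hL : SlowlyVarying L) (htail : ∀ x > 0, rtail F x = L x * x ^ (-α)) {β : ℝ} (hαβ : α < β)
    (hβ : 0 ≤ β) :
    ∃ C X : ℝ, 0 < X ∧ ∀ u v, 0 < u → u ≤ v → X ≤ v →
      rtail F u ≤ C * (v / u) ^ β * rtail F v := by
  have hlim : (1 / 2 : ℝ) ^ (-α) < 2 ^ β := by
    rw [one_div, inv_rpow zero_le_two, rpow_neg zero_le_two, inv_inv]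
    exact rpow_lt_rpow_of_exponent_lt one_lt_two hαβ
  obtain ⟨X₀, hX₀⟩ := eventually_atTop.1
    (((tendsto_rtail_mul_div_rtail hL htail one_half_pos).eventually (gt_mem_nhds hlim)).and
      (eventually_gt_atTop 0))
  set X := max X₀ 1
  have hX : 0 < X := zero_lt_one.trans_le (le_max_right _ _)
  have hd : ∀ z, X ≤ z → rtail F (z / 2) ≤ 2 ^ β * rtail F z := by
    intro z hz
    obtain ⟨hlt, hz0⟩ := hX₀ z (le_of_max_le_left hz)
    rw [div_lt_iff₀ (rtail_pos hLpos htail hz0), one_div_mul_eq_div] at hlt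
    exact hlt.le
  have hFX := rtail_pos hLpos htail hX
  have hdbl : ∀ {u v}, X ≤ u → u ≤ v → rtail F u ≤ (2 * v / u) ^ β * rtail F v :=
    rtail_antitone.le_rpow_mul_of_doubling rtail_nonneg hβ hX hd
  refine ⟨2 ^ β / rtail F X, X, hX, fun u v hu huv hXv => ?_⟩
  have hv : 0 < v := hu.trans_le huv
  have hFv := rtail_nonneg (F := F) v
  rcases le_or_gt X u with hXu | huX
  · calc rtail F u ≤ (2 * v / u) ^ β * rtail F v := hdbl hXu huv
      _ = 2 ^ β * (v / u) ^ β * rtail F v := by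
        rw [mul_div_assoc, mul_rpow zero_le_two (by positivity)]
      _ ≤ 2 ^ β / rtail F X * (v / u) ^ β * rtail F v := by
        gcongr
        exact le_div_self (by positivity) hFX (rtail_le_one X)
  · calc rtail F u ≤ rtail F X / rtail F X := by rw [div_self hFX.ne']; exact rtail_le_one u
      _ ≤ (2 * v / X) ^ β * rtail F v / rtail F X := by gcongr; exact hdbl le_rfl hXv
      _ ≤ (2 * v / u) ^ β * rtail F v / rtail F X := by
        gcongr
      _ = 2 ^ β / rtail F X * (v / u) ^ β * rtail F v := by
        rw [mul_div_assoc 2 v u, mul_rpow zero_le_two (by positivity)]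
        ring

end RegularVariation

theorem exists_lt_one_rpow_neg_lt (α : ℝ) {δ : ℝ} (hδ : 0 < δ) :
    ∃ t : ℝ, 0 < t ∧ t < 1 ∧ t ^ (-α) < 1 + δ := by
  have hcont : Tendsto (fun t : ℝ => t ^ (-α)) (𝓝[<] 1) (𝓝 1) := by
    simpa using ((continuousAt_rpow_const 1 (-α) (Or.inl one_ne_zero)).tendsto).mono_left
      nhdsWithin_le_nhds
  obtain ⟨t, ⟨ht0, ht1⟩, htα⟩ := (Eventually.and (Ioo_mem_nhdsLT zero_lt_one)
    (hcont.eventually (gt_mem_nhds (lt_add_of_pos_right 1 hδ)))).exists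
  exact ⟨t, ht0, ht1, htα⟩

section Sequences

variable {F : Measure ℝ} {α : ℝ} {L : ℝ → ℝ} {x φ : ℕ → ℝ}

theorem eventually_rtail_mul_le (hLpos : ∀ x > 0, 0 < L x) (hL : SlowlyVarying L)
    (htail : ∀ x > 0, rtail F x = L x * x ^ (-α)) (hxtop : Tendsto x atTop atTop) {t δ : ℝ}
    (ht : 0 < t) (hδ : t ^ (-α) < δ) :
    ∀ᶠ n in atTop, rtail F (t * x n) ≤ δ * rtail F (x n) := by
  filter_upwards [((tendsto_rtail_mul_div_rtail hL htail ht).comp hxtop).eventually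
    (gt_mem_nhds hδ), hxtop.eventually_gt_atTop 0] with n hn hxn
  exact ((div_lt_iff₀ (rtail_pos hLpos htail hxn)).1 hn).le

theorem eventually_exp_mul_rtail_le [IsProbabilityMeasure F] (hα : 0 < α)
    (hLpos : ∀ x > 0, 0 < L x) (hL : SlowlyVarying L)
    (htail : ∀ x > 0, rtail F x = L x * x ^ (-α)) (hφ : ∀ n, 0 < φ n)
    (hxtop : Tendsto x atTop atTop) (hφx : Tendsto (fun n => φ n * x n) atTop atTop) {t δ : ℝ}
    (ht : t < 1) (hδ : 0 < δ) :
    ∀ᶠ n in atTop, exp (φ n * (t * x n)) * rtail F (2 * α / φ n) ≤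
      δ * (exp (φ n * x n) * rtail F (x n)) := by
  set β := α + 1
  obtain ⟨C, X, hX, hpotter⟩ :=
    rtail_le_mul_rpow_div_mul_rtail hLpos hL htail (lt_add_one α) (by positivity : 0 ≤ β)
  have hsmall : ∀ᶠ n in atTop,
      C / (2 * α) ^ β * ((φ n * x n) ^ β * exp (-(1 - t) * (φ n * x n))) ≤ δ := by
    have hlim := ((tendsto_rpow_mul_exp_neg_mul_atTop_nhds_zero β (1 - t)
      (sub_pos.2 ht)).const_mul (C / (2 * α) ^ β)).comp hφx
    rw [mul_zero] at hlim
    exact hlim.eventually (ge_mem_nhds hδ)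
  filter_upwards [hφx.eventually_ge_atTop (2 * α), hxtop.eventually_ge_atTop X, hsmall]
    with n hs hXx hsmall_n
  set s := φ n * x n with hs_def
  have hφn := hφ n
  have hax : 2 * α / φ n ≤ x n := by rw [div_le_iff₀ hφn]; linarith
  have hP := hpotter _ _ (by positivity) hax hXx
  rw [show x n / (2 * α / φ n) = s / (2 * α) by rw [hs_def]; field_simp,
    div_rpow (hα.le.trans (by linarith)) (by positivity)] at hP
  have hexp : exp (φ n * (t * x n)) = exp (-(1 - t) * s) * exp s := by
    rw [← exp_add, hs_def]; ring_nf
  calc exp (φ n * (t * x n)) * rtail F (2 * α / φ n)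
      ≤ exp (-(1 - t) * s) * exp s * (C * (s ^ β / (2 * α) ^ β) * rtail F (x n)) := by
        rw [hexp]; gcongr
    _ = C / (2 * α) ^ β * (s ^ β * exp (-(1 - t) * s)) * (exp s * rtail F (x n)) := by ring
    _ ≤ δ * (exp s * rtail F (x n)) := by have := rtail_nonneg (F := F) (x n); gcongr

theorem eventually_setIntegral_Iic_exp_mul_le [IsProbabilityMeasure F] (hα : 0 < α)
    (hLpos : ∀ x > 0, 0 < L x) (hL : SlowlyVarying L)
    (htail : ∀ x > 0, rtail F x = L x * x ^ (-α)) (hint : Integrable (fun x => x) F)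
    (hmean : ∫ x, x ∂F = 0) {κ : ℝ} (hκ0 : 0 < κ) (hκ2 : κ ≤ 2)
    (hmom : Integrable (fun x => |x| ^ κ) F) (hφ : ∀ n, 0 < φ n)
    (hxtop : Tendsto x atTop atTop) (hφx : Tendsto (fun n => φ n * x n) atTop atTop)
    {ε : ℝ} (hε : 0 < ε) :
    ∀ᶠ n in atTop, ∫ y in Iic (x n), exp (φ n * y) ∂F ≤
      1 + exp (2 * α) * φ n ^ κ * ∫ y, |y| ^ κ ∂F
        + (1 + ε) * exp (φ n * x n) * rtail F (x n) := by
  obtain ⟨t, ht0, ht1, htα⟩ := exists_lt_one_rpow_neg_lt α (half_pos hε)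
  filter_upwards [eventually_exp_mul_rtail_le hα hLpos hL htail hφ hxtop hφx ht1 (half_pos hε),
    eventually_rtail_mul_le hLpos hL htail hxtop ht0 htα, hφx.eventually_ge_atTop (2 * α / t),
    hxtop.eventually_gt_atTop 0] with n hmid htop hs hxn
  have hφn := hφ n
  have ha : 2 * α / φ n ≤ t * x n := by
    rw [div_le_iff₀ ht0] at hs
    rw [div_le_iff₀ hφn]
    linarith
  have htx : t * x n ≤ x n := mul_le_of_le_one_left hxn.le ht1.le
  calc ∫ y in Iic (x n), exp (φ n * y) ∂F
      ≤ ∫ y in Iic (2 * α / φ n), exp (φ n * y) ∂F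
        + exp (φ n * (t * x n)) * rtail F (2 * α / φ n) + exp (φ n * x n) * rtail F (t * x n) :=
        setIntegral_Iic_exp_mul_le_add hφn.le ha htx
    _ ≤ 1 + exp (2 * α) * φ n ^ κ * ∫ y, |y| ^ κ ∂F
        + ε / 2 * (exp (φ n * x n) * rtail F (x n))
        + exp (φ n * x n) * ((1 + ε / 2) * rtail F (x n)) := by
      gcongr
      exact setIntegral_Iic_exp_mul_le hint hmean hκ0 hκ2 hmom hφn (by positivity)
    _ = _ := by ring

end Sequences

theorem stmt0_general
    (F : Measure ℝ) [IsProbabilityMeasure F]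
    (α : ℝ) (hα : 1 < α)
    (L : ℝ → ℝ) (hLpos : ∀ x > 0, 0 < L x) (hL : SlowlyVarying L)
    (htail : ∀ x > 0, rtail F x = L x * x ^ (-α))
    (hmeanInt : Integrable (fun x => x) F) (hmean : ∫ x, x ∂F = 0)
    (κ : ℝ) (hκ0 : 0 < κ) (hκ : κ < min α 2)
    (hmom : Integrable (fun x => |x| ^ κ) F)
    (x φ : ℕ → ℝ) (hφ : ∀ n, 0 < φ n)
    (hxtop : Tendsto x atTop atTop)
    (hφx : Tendsto (fun n => φ n * x n) atTop atTop) :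
    ∃ c > 0, ∀ ε > 0, ∃ N : ℕ, ∀ n ≥ N,
      ∫ y in Set.Iic (x n), Real.exp (φ n * y) ∂F ≤
        1 + c * φ n ^ κ + Real.exp (2 * α) * rtail F (2 * α / φ n)
          + (1 + ε) * Real.exp (φ n * x n) * rtail F (x n) := by
  set m := ∫ y, |y| ^ κ ∂F
  have hm : 0 ≤ m := integral_nonneg fun y => by positivity
  refine ⟨exp (2 * α) * (m + 1), by positivity, fun ε hε => ?_⟩
  obtain ⟨N, hN⟩ := eventually_atTop.1 <| eventually_setIntegral_Iic_exp_mul_le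
    (by linarith) hLpos hL htail hmeanInt hmean hκ0 (hκ.le.trans (min_le_right _ _)) hmom hφ
    hxtop hφx hε
  refine ⟨N, fun n hn => (hN n hn).trans ?_⟩
  have hφκ : 0 ≤ φ n ^ κ := rpow_nonneg (hφ n).le κ
  have hF := rtail_nonneg (F := F) (2 * α / φ n)
  nlinarith [exp_pos (2 * α)]

/-- There is a constant `c > 0` (independent of `n` and of `ε`) such that for every `ε > 0`,
for all sufficiently large `n`,
`∫_{(-∞, xₙ]} e^{φₙ x} dF(x) ≤ 1 + c φₙ^κ + e^{2α} F̄(2α/φₙ) + (1+ε) e^{φₙ xₙ} F̄(xₙ)`. -/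
theorem stmt0
    (F : Measure ℝ) [IsProbabilityMeasure F]
    (α : ℝ) (hα : 1 < α)
    (L : ℝ → ℝ) (hLpos : ∀ x > 0, 0 < L x) (hL : SlowlyVarying L)
    (htail : ∀ x > 0, rtail F x = L x * x ^ (-α))
    (hmeanInt : Integrable (fun x => x) F) (hmean : ∫ x, x ∂F = 0)
    (κ : ℝ) (hκ0 : 0 < κ) (hκ : κ < min α 2)
    (hmom : Integrable (fun x => |x| ^ κ) F)
    (x φ : ℕ → ℝ) (hx : ∀ n, 0 < x n) (hφ : ∀ n, 0 < φ n)
    (hxtop : Tendsto x atTop atTop)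
    (hφx : Tendsto (fun n => φ n * x n) atTop atTop) :
    ∃ c > 0, ∀ ε > 0, ∃ N : ℕ, ∀ n ≥ N,
      ∫ y in Set.Iic (x n), Real.exp (φ n * y) ∂F ≤
        1 + c * φ n ^ κ + Real.exp (2 * α) * rtail F (2 * α / φ n)
          + (1 + ε) * Real.exp (φ n * x n) * rtail F (x n) :=
  stmt0_general F α hα L hLpos hL htail hmeanInt hmean κ hκ0 hκ hmom x φ hφ hxtop hφx
end
end

section
/- The estimator Z_dom is unbiased for P(A_dom) under the importance sampling measure P̃ and its second moment is bounded by (nF̄(b))²; that is, ∫ Z_dom dP̃ = F^{⊗n}(A_dom) and ∫ Z_dom² dP̃ ≤ (nF̄(b))². -/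
/-!
Under `P̃` a uniformly chosen coordinate is drawn from `F` conditioned on `(b, ∞)` and the others
from `F`, so `P̃` has density `#{j | x j > b} / (n F̄(b))` with respect to `F^{⊗n}`. On `A_dom`
this density is exactly `1 / Z_dom`, and `Z_dom` vanishes off `A_dom`; hence `Z_dom` times the
density is the indicator of `A_dom`, which is unbiasedness. Since some coordinate exceeds `b` on
`A_dom`, `Z_dom ≤ n F̄(b)` pointwise, which bounds the second moment.
-/

open MeasureTheory ProbabilityTheory Filter
open scoped Classical

noncomputable section

/-- The importance sampling measure `P̃ = (1/n) Σ_{i=1}^n ⊗_j μ_j^{(i)}`, where `μ_j^{(i)} = F`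
for `j ≠ i` and `μ_i^{(i)}` is `F` conditioned on `(b,∞)`. -/
def Ptilde (F : Measure ℝ) (n : ℕ) (b : ℝ) : Measure (Fin n → ℝ) :=
  ((n : ENNReal))⁻¹ •
    ∑ i : Fin n, Measure.pi (fun j => if j = i then F[|Set.Ioi b] else F)

/-- The dominant event `A_dom = {x ∈ ℝⁿ : x₁+⋯+xₙ > b and max_j x_j > b}`. -/
def Adom (n : ℕ) (b : ℝ) : Set (Fin n → ℝ) :=
  {x | (∑ j, x j) > b ∧ ∃ j, x j > b}

/-- The estimator `Z_dom(x) = n F̄(b) / #{j : x_j > b}` on `A_dom`, and `0` otherwise. -/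
def Zdom (F : Measure ℝ) (n : ℕ) (b : ℝ) (x : Fin n → ℝ) : ℝ :=
  if x ∈ Adom n b then
    (n : ℝ) * rtail F b / (Finset.univ.filter (fun j => x j > b)).card
  else 0

open Finset Set
open scoped ENNReal

theorem MeasureTheory.Measure.pi_ite_cond_eq_smul_restrict {ι α : Type*} [Fintype ι]
    [DecidableEq ι] [MeasurableSpace α] (μ : Measure α) [SigmaFinite μ] (s : Set α) (i : ι) :
    Measure.pi (fun j => if j = i then μ[|s] else μ) =
      (μ s)⁻¹ • (Measure.pi fun _ => μ).restrict (Function.eval i ⁻¹' s) := by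
  have (j : ι) : SigmaFinite (if j = i then μ[|s] else μ) := by split_ifs <;> infer_instance
  refine Measure.pi_eq fun t _ => ?_
  rw [eval_preimage, Measure.restrict_pi_pi, Measure.smul_apply, Measure.pi_pi, smul_eq_mul,
    Fintype.prod_eq_mul_prod_compl i, Fintype.prod_eq_mul_prod_compl i, ← mul_assoc]
  congr 1
  · simp [ProbabilityTheory.cond, Measure.smul_apply]
  · refine Finset.prod_congr rfl fun j hj => ?_
    have hji : j ≠ i := by simpa using hj
    simp [hji]

lemma measurableSet_Adom (n : ℕ) (b : ℝ) : MeasurableSet (Adom n b) := by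
  unfold Adom
  measurability

lemma measurable_card_filter_gt (n : ℕ) (b : ℝ) :
    Measurable fun x : Fin n → ℝ => (#{j | x j > b} : ℝ) := by
  simp only [card_filter]
  push_cast
  exact Finset.measurable_sum _ fun j _ =>
    Measurable.ite (measurableSet_lt measurable_const (measurable_pi_apply j)) measurable_const
      measurable_const

lemma measurable_Zdom (F : Measure ℝ) (n : ℕ) (b : ℝ) : Measurable (Zdom F n b) :=
  (measurable_const.div (measurable_card_filter_gt n b)).ite (measurableSet_Adom n b)
    measurable_const

lemma Zdom_nonneg (F : Measure ℝ) (n : ℕ) (b : ℝ) (x : Fin n → ℝ) : 0 ≤ Zdom F n b x := by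
  unfold Zdom rtail
  split_ifs <;> positivity

lemma Zdom_le (F : Measure ℝ) (n : ℕ) (b : ℝ) (x : Fin n → ℝ) :
    Zdom F n b x ≤ n * rtail F b := by
  have hC : 0 ≤ n * rtail F b := by unfold rtail; positivity
  unfold Zdom
  split_ifs with hx
  · obtain ⟨j, hj⟩ := hx.2
    refine div_le_self hC ?_
    exact_mod_cast card_pos.mpr ⟨j, by simpa using hj⟩
  · exact hC

lemma card_filter_gt_mul_Zdom (F : Measure ℝ) (n : ℕ) (b : ℝ) (x : Fin n → ℝ) :
    #{j | x j > b} * Zdom F n b x = (Adom n b).indicator (fun _ => n * rtail F b) x := by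
  unfold Zdom
  split_ifs with hx
  · obtain ⟨j, hj⟩ := hx.2
    have hpos : (0 : ℝ) < #{j | x j > b} := by
      exact_mod_cast card_pos.mpr ⟨j, by simpa using hj⟩
    rw [indicator_of_mem hx, mul_div_cancel₀ _ hpos.ne']
  · rw [indicator_of_notMem hx, mul_zero]

lemma Ptilde_eq_sum_restrict (F : Measure ℝ) [SigmaFinite F] (n : ℕ) (b : ℝ) :
    Ptilde F n b = (n : ℝ≥0∞)⁻¹ •
      ∑ i : Fin n, (F (Ioi b))⁻¹ • (Measure.pi fun _ => F).restrict {x | x i > b} := by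
  simp only [Ptilde, Measure.pi_ite_cond_eq_smul_restrict]
  rfl

lemma isProbabilityMeasure_Ptilde (F : Measure ℝ) [IsProbabilityMeasure F] {n : ℕ} (hn : n ≠ 0)
    {b : ℝ} (hF : F (Ioi b) ≠ 0) : IsProbabilityMeasure (Ptilde F n b) := by
  have := cond_isProbabilityMeasure hF
  have (i j : Fin n) : IsProbabilityMeasure (if j = i then F[|Ioi b] else F) := by
    split_ifs <;> infer_instance
  constructor
  simp [Ptilde, Measure.smul_apply, ENNReal.inv_mul_cancel, hn]

lemma integral_Ptilde (F : Measure ℝ) [SigmaFinite F] (n : ℕ) {b : ℝ} (hF : F (Ioi b) ≠ 0)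
    {f : (Fin n → ℝ) → ℝ} (hf : Integrable f (Measure.pi fun _ => F)) :
    ∫ x, f x ∂Ptilde F n b =
      (n * rtail F b)⁻¹ * ∫ x, #{j | x j > b} * f x ∂(Measure.pi fun _ => F) := by
  have hS (i : Fin n) : MeasurableSet {x : Fin n → ℝ | x i > b} :=
    measurableSet_lt measurable_const (measurable_pi_apply i)
  have hsum (x : Fin n → ℝ) :
      ∑ i, {y : Fin n → ℝ | y i > b}.indicator f x = #{j | x j > b} * f x := by
    simp [indicator_apply, Finset.sum_ite]
  rw [Ptilde_eq_sum_restrict, integral_smul_measure,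
    integral_finsetSum_measure fun i _ => (hf.restrict).smul_measure (ENNReal.inv_ne_top.2 hF)]
  simp_rw [integral_smul_measure, ← integral_indicator (hS _), ← Finset.smul_sum,
    ← integral_finsetSum _ fun i _ => hf.indicator (hS i), hsum]
  simp only [rtail, ENNReal.toReal_inv, ENNReal.toReal_natCast, smul_eq_mul]
  ring

theorem stmt4_general
    (F : Measure ℝ) [IsProbabilityMeasure F]
    (n : ℕ) (hn : 0 < n) (b : ℝ) (hFb : 0 < rtail F b) :
    (∫ x, Zdom F n b x ∂(Ptilde F n b)) =
      ((Measure.pi fun _ : Fin n => F) (Adom n b)).toReal ∧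
    (∫ x, (Zdom F n b x) ^ 2 ∂(Ptilde F n b)) ≤ ((n : ℝ) * rtail F b) ^ 2 := by
  have hF : F (Ioi b) ≠ 0 := fun h => hFb.ne' (by simp [rtail, h])
  have hZ_bound (x : Fin n → ℝ) : ‖Zdom F n b x‖ ≤ n * rtail F b := by
    rw [Real.norm_of_nonneg (Zdom_nonneg F n b x)]
    exact Zdom_le F n b x
  have := isProbabilityMeasure_Ptilde F hn.ne' hF
  constructor
  · rw [integral_Ptilde F n hF (.of_bound (measurable_Zdom F n b).aestronglyMeasurable _
      (ae_of_all _ hZ_bound))]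
    simp_rw [card_filter_gt_mul_Zdom, integral_indicator_const _ (measurableSet_Adom n b)]
    rw [smul_eq_mul, Measure.real]
    field_simp
  · calc ∫ x, Zdom F n b x ^ 2 ∂Ptilde F n b ≤ ∫ _, ((n : ℝ) * rtail F b) ^ 2 ∂Ptilde F n b :=
          integral_mono_of_nonneg (ae_of_all _ fun x => sq_nonneg _) (integrable_const _)
            (ae_of_all _ fun x => pow_le_pow_left₀ (Zdom_nonneg F n b x) (Zdom_le F n b x) 2)
      _ = ((n : ℝ) * rtail F b) ^ 2 := by simp

/-- `Z_dom` is unbiased for `P(A_dom)` under `P̃`, and its second moment under `P̃` is at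
most `(n F̄(b))²`. -/
theorem stmt4
    (F : Measure ℝ) [IsProbabilityMeasure F] [NullSingletonClass F]
    (n : ℕ) (hn : 0 < n) (b : ℝ) (hb : 0 < b) (hFb : 0 < rtail F b) :
    (∫ x, Zdom F n b x ∂(Ptilde F n b)) =
      ((Measure.pi fun _ : Fin n => F) (Adom n b)).toReal ∧
    (∫ x, (Zdom F n b x) ^ 2 ∂(Ptilde F n b)) ≤ ((n : ℝ) * rtail F b) ^ 2 :=
  stmt4_general F n hn b hFb
end
end

section
/- The estimator Z_res is unbiased for P(A_res) under the exponentially twisted measure P_θ, and its second moment satisfies ∫ Z_res dP_θ = F^{⊗n}(A_res) and ∫ Z_res² dP_θ ≤ nF̄(b)·exp(nΛ_b(θ_{n,b}))·F^{⊗n}(A_res). -/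
/-!
On `A_res` every coordinate lies below `b`, so the truncation in `F_θ` is invisible there and
`Z_res` is exactly the likelihood ratio `dF^{⊗n} / dP_θ` on `A_res` (and vanishes off it). Hence
`E_θ[Z_res] = F^{⊗n}(A_res)` and `E_θ[Z_res²] = E_F[Z_res; A_res]`. On `A_res` the sum exceeds
`b` and `θ_{n,b} > 0`, so `Z_res ≤ exp(-θ_{n,b} b + nΛ_b) = n F̄(b) exp(nΛ_b)`: this is what the
choice of `θ_{n,b}` buys.
-/

open MeasureTheory ProbabilityTheory Filter
open scoped Classical
open scoped ENNReal

noncomputable section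

/-- The twisting parameter `θ_{n,b} = -log(n F̄(b)) / b`. -/
def theta (F : Measure ℝ) (n : ℕ) (b : ℝ) : ℝ := -Real.log ((n : ℝ) * rtail F b) / b

/-- The truncated log-moment generating function `Λ_b(θ) = log ∫_{(-∞,b]} e^{θx} dF(x)`. -/
def Lam (F : Measure ℝ) (b θ : ℝ) : ℝ :=
  Real.log (∫ x in Set.Iic b, Real.exp (θ * x) ∂F)

/-- The truncated exponentially twisted measure `F_θ`, with density
`exp(θ_{n,b} x − Λ_b(θ_{n,b})) 1(x < b)` with respect to `F`. -/
def Ftheta (F : Measure ℝ) (n : ℕ) (b : ℝ) : Measure ℝ :=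
  F.withDensity (fun x =>
    ENNReal.ofReal (if x < b then Real.exp (theta F n b * x - Lam F b (theta F n b)) else 0))

/-- The residual event `A_res = {x ∈ ℝⁿ : x₁+⋯+xₙ > b and max_j x_j < b}`. -/
def Ares (n : ℕ) (b : ℝ) : Set (Fin n → ℝ) :=
  {x | (∑ j, x j) > b ∧ ∀ j, x j < b}

/-- The estimator `Z_res(x) = exp(−θ_{n,b}(x₁+⋯+xₙ) + n Λ_b(θ_{n,b})) 1_{A_res}(x)`. -/
def Zres (F : Measure ℝ) (n : ℕ) (b : ℝ) (x : Fin n → ℝ) : ℝ :=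
  if x ∈ Ares n b then
    Real.exp (-(theta F n b) * (∑ j, x j) + (n : ℝ) * Lam F b (theta F n b))
  else 0

section ProductOfDensities

variable {ι : Type*} [Fintype ι] {α : ι → Type*} [∀ i, MeasurableSpace (α i)]
  (μ : ∀ i, Measure (α i)) [∀ i, IsProbabilityMeasure (μ i)]

theorem lintegral_pi_prod_eq_prod_lintegral {f : ∀ i, α i → ℝ≥0∞} (hf : ∀ i, Measurable (f i)) :
    ∫⁻ x, ∏ i, f i (x i) ∂Measure.pi μ = ∏ i, ∫⁻ y, f i y ∂μ i := by
  rw [lintegral_prod_eq_prod_lintegral_of_indepFun Finset.univ _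
    (iIndepFun_pi fun i => (hf i).aemeasurable) fun i => (hf i).comp (measurable_pi_apply i)]
  exact Finset.prod_congr rfl fun i _ => (measurePreserving_eval μ i).lintegral_comp (hf i)

theorem pi_withDensity {g : ∀ i, α i → ℝ≥0∞} (hg : ∀ i, Measurable (g i))
    (hg_ne_top : ∀ i x, g i x ≠ ∞) :
    Measure.pi (fun i => (μ i).withDensity (g i)) =
      (Measure.pi μ).withDensity (fun x => ∏ i, g i (x i)) := by
  have := fun i => SigmaFinite.withDensity_of_ne_top' (μ := μ i) (hg_ne_top i)
  refine Measure.pi_eq fun s hs => ?_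
  have hbox : (Set.univ.pi s).indicator (fun x => ∏ i, g i (x i)) =
      fun x => ∏ i, (s i).indicator (g i) (x i) := by
    ext x
    simp [Set.indicator, Finset.prod_ite_zero]
  rw [withDensity_apply _ (.univ_pi hs), ← lintegral_indicator (.univ_pi hs), hbox,
    lintegral_pi_prod_eq_prod_lintegral μ fun i => (hg i).indicator (hs i)]
  exact Finset.prod_congr rfl fun i _ => by
    rw [lintegral_indicator (hs i), withDensity_apply _ (hs i)]

end ProductOfDensities

section LikelihoodRatio

variable {α : Type*} [MeasurableSpace α] {μ : Measure α} {D : α → ℝ≥0∞} {Z : α → ℝ}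
  {A : Set α}

theorem lintegral_withDensity_ofReal_mul_eq_setLIntegral (hD : Measurable D) (hZ : Measurable Z)
    (hA : MeasurableSet A) (hDZ : ∀ x, D x * ENNReal.ofReal (Z x) = A.indicator 1 x)
    {k : α → ℝ≥0∞} (hk : Measurable k) :
    ∫⁻ x, ENNReal.ofReal (Z x) * k x ∂μ.withDensity D = ∫⁻ x in A, k x ∂μ := by
  rw [lintegral_withDensity_eq_lintegral_mul _ hD
      (by fun_prop : Measurable fun x => ENNReal.ofReal (Z x) * k x),
    ← lintegral_indicator hA]
  refine lintegral_congr fun x => ?_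
  simp only [Pi.mul_apply, ← mul_assoc, hDZ]
  by_cases hx : x ∈ A <;> simp [hx]

theorem integral_withDensity_eq_toReal_measure (hD : Measurable D) (hZ : Measurable Z)
    (hZ_nonneg : ∀ x, 0 ≤ Z x) (hA : MeasurableSet A)
    (hDZ : ∀ x, D x * ENNReal.ofReal (Z x) = A.indicator 1 x) :
    ∫ x, Z x ∂μ.withDensity D = (μ A).toReal := by
  have h := lintegral_withDensity_ofReal_mul_eq_setLIntegral (μ := μ) hD hZ hA hDZ measurable_one
  simp only [Pi.one_apply, mul_one, lintegral_const, Measure.restrict_apply_univ, one_mul] at h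
  rw [integral_eq_lintegral_of_nonneg_ae (ae_of_all _ hZ_nonneg) hZ.aestronglyMeasurable, h]

theorem integral_sq_withDensity_eq_setIntegral (hD : Measurable D) (hZ : Measurable Z)
    (hZ_nonneg : ∀ x, 0 ≤ Z x) (hA : MeasurableSet A)
    (hDZ : ∀ x, D x * ENNReal.ofReal (Z x) = A.indicator 1 x) :
    ∫ x, Z x ^ 2 ∂μ.withDensity D = ∫ x in A, Z x ∂μ := by
  have h := lintegral_withDensity_ofReal_mul_eq_setLIntegral (μ := μ) hD hZ hA hDZ
    hZ.ennreal_ofReal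
  rw [integral_eq_lintegral_of_nonneg_ae (ae_of_all _ fun x => sq_nonneg (Z x))
      (hZ.pow_const 2).aestronglyMeasurable,
    integral_eq_lintegral_of_nonneg_ae (ae_of_all _ hZ_nonneg) hZ.aestronglyMeasurable, ← h]
  simp_rw [ENNReal.ofReal_pow (hZ_nonneg _), pow_two]

end LikelihoodRatio

section ResidualEstimator

variable (F : Measure ℝ) (n : ℕ) (b : ℝ)

def FthetaDensity (x : ℝ) : ℝ≥0∞ :=
  ENNReal.ofReal (if x < b then Real.exp (theta F n b * x - Lam F b (theta F n b)) else 0)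

theorem Ftheta_eq_withDensity : Ftheta F n b = F.withDensity (FthetaDensity F n b) := rfl

theorem measurable_FthetaDensity : Measurable (FthetaDensity F n b) :=
  (Measurable.ite measurableSet_Iio (by fun_prop) measurable_const).ennreal_ofReal

theorem measurableSet_Ares : MeasurableSet (Ares n b) := by
  have hAres : Ares n b = {x | b < ∑ j, x j} ∩ ⋂ j, {x | x j < b} := by
    ext x
    simp [Ares, Set.mem_iInter]
  rw [hAres]
  exact (measurableSet_lt measurable_const (by fun_prop)).inter
    (.iInter fun j => measurableSet_lt (measurable_pi_apply j) measurable_const)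

theorem measurable_Zres : Measurable (Zres F n b) :=
  Measurable.ite (measurableSet_Ares n b) (by fun_prop) measurable_const

theorem Zres_nonneg (x : Fin n → ℝ) : 0 ≤ Zres F n b x := by
  unfold Zres
  split_ifs
  exacts [(Real.exp_pos _).le, le_rfl]

theorem prod_FthetaDensity_mul_Zres (x : Fin n → ℝ) :
    (∏ j, FthetaDensity F n b (x j)) * ENNReal.ofReal (Zres F n b x) =
      (Ares n b).indicator 1 x := by
  by_cases hx : x ∈ Ares n b
  · have hdens : ∀ j, FthetaDensity F n b (x j) =
        ENNReal.ofReal (Real.exp (theta F n b * x j - Lam F b (theta F n b))) := fun j => by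
      rw [FthetaDensity, if_pos (hx.2 j)]
    rw [Finset.prod_congr rfl fun j _ => hdens j,
      ← ENNReal.ofReal_prod_of_nonneg fun j _ => (Real.exp_pos _).le, Zres, if_pos hx,
      ← ENNReal.ofReal_mul (by positivity), ← Real.exp_sum, ← Real.exp_add,
      Set.indicator_of_mem hx]
    simp [Finset.sum_sub_distrib, ← Finset.mul_sum]
  · simp [Zres, hx]

theorem theta_pos (hb : 0 < b) (hFb : 0 < (n : ℝ) * rtail F b) (hFb1 : (n : ℝ) * rtail F b < 1) :
    0 < theta F n b :=
  div_pos (neg_pos.2 (Real.log_neg hFb hFb1)) hb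

theorem exp_neg_theta_mul (hb : b ≠ 0) (hFb : 0 < (n : ℝ) * rtail F b) :
    Real.exp (-(theta F n b * b)) = n * rtail F b := by
  rw [theta, div_mul_cancel₀ _ hb, neg_neg, Real.exp_log hFb]

theorem Zres_le (hb : 0 < b) (hFb : 0 < (n : ℝ) * rtail F b) (hFb1 : (n : ℝ) * rtail F b < 1)
    {x : Fin n → ℝ} (hx : x ∈ Ares n b) :
    Zres F n b x ≤ n * rtail F b * Real.exp (n * Lam F b (theta F n b)) := by
  have hθ := theta_pos F n b hb hFb hFb1
  calc Zres F n b x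
      = Real.exp (-(theta F n b) * (∑ j, x j) + n * Lam F b (theta F n b)) := if_pos hx
    _ ≤ Real.exp (-(theta F n b * b) + n * Lam F b (theta F n b)) := by
      gcongr
      nlinarith [hx.1]
    _ = n * rtail F b * Real.exp (n * Lam F b (theta F n b)) := by
      rw [Real.exp_add, exp_neg_theta_mul F n b hb.ne' hFb]

end ResidualEstimator

theorem stmt5_general
    (F : Measure ℝ) [IsProbabilityMeasure F]
    (n : ℕ) (b : ℝ) (hb : 0 < b)
    (hFb : 0 < (n : ℝ) * rtail F b) (hFb1 : (n : ℝ) * rtail F b < 1) :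
    (∫ x, Zres F n b x ∂(Measure.pi fun _ : Fin n => Ftheta F n b)) =
      ((Measure.pi fun _ : Fin n => F) (Ares n b)).toReal ∧
    (∫ x, (Zres F n b x) ^ 2 ∂(Measure.pi fun _ : Fin n => Ftheta F n b)) ≤
      (n : ℝ) * rtail F b * Real.exp ((n : ℝ) * Lam F b (theta F n b)) *
        ((Measure.pi fun _ : Fin n => F) (Ares n b)).toReal := by
  have hD : Measurable fun x : Fin n → ℝ => ∏ j, FthetaDensity F n b (x j) :=
    Finset.measurable_prod _ fun j _ => (measurable_FthetaDensity F n b).comp (measurable_pi_apply j)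
  have hZ := measurable_Zres F n b
  have hA := measurableSet_Ares n b
  rw [Ftheta_eq_withDensity, pi_withDensity (fun _ => F) (fun _ => measurable_FthetaDensity F n b)
    fun _ _ => ENNReal.ofReal_ne_top]
  refine ⟨integral_withDensity_eq_toReal_measure hD hZ (Zres_nonneg F n b) hA
    (prod_FthetaDensity_mul_Zres F n b), ?_⟩
  rw [integral_sq_withDensity_eq_setIntegral hD hZ (Zres_nonneg F n b) hA
    (prod_FthetaDensity_mul_Zres F n b)]
  refine (Real.le_norm_self _).trans (norm_setIntegral_le_of_norm_le_const (measure_lt_top _ _)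
    fun x hx => ?_)
  rw [Real.norm_of_nonneg (Zres_nonneg F n b x)]
  exact Zres_le F n b hb hFb hFb1 hx

/-- `Z_res` is unbiased for `P(A_res)` under `P_θ = F_θ^{⊗n}`, and
`∫ Z_res² dP_θ ≤ n F̄(b) exp(n Λ_b(θ_{n,b})) P(A_res)`. -/
theorem stmt5
    (F : Measure ℝ) [IsProbabilityMeasure F] [NullSingletonClass F]
    (n : ℕ) (hn : 0 < n) (b : ℝ) (hb : 0 < b)
    (hFb : 0 < (n : ℝ) * rtail F b) (hFb1 : (n : ℝ) * rtail F b < 1) :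
    (∫ x, Zres F n b x ∂(Measure.pi fun _ : Fin n => Ftheta F n b)) =
      ((Measure.pi fun _ : Fin n => F) (Ares n b)).toReal ∧
    (∫ x, (Zres F n b x) ^ 2 ∂(Measure.pi fun _ : Fin n => Ftheta F n b)) ≤
      (n : ℝ) * rtail F b * Real.exp ((n : ℝ) * Lam F b (theta F n b)) *
        ((Measure.pi fun _ : Fin n => F) (Ares n b)).toReal :=
  stmt5_general F n b hb hFb hFb1
end
end
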